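/- arXiv:1208.4272 — 2 statements merged into one kernel-verified Lean document; each statement's English description precedes it below -/
import Mathlib

section
/- Let K be a compact metric space, let k ≥ 1 be an integer, and let X be a Borel measurable random variable with values in C(K), the Banach space of continuous real-valued functions on K with the supremum norm. Then E|x*(X)|^k < ∞ for every continuous linear functional x* on C(K) if and only if sup{E|X(t)|^k : t ∈ K} < ∞, where X(t) denotes the real random variable ω ↦ X(ω)(t). -/
/-!
The forward direction is the closed graph theorem: `x ↦ x ∘ X` is a linear map from the dual of
`C(K)` into `Lᵏ` whose graph is closed (an `Lᵏ` limit is an a.e. limit along a subsequence), so it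
is bounded, and point evaluations have norm at most one.

For the converse, a partition of unity `(ρᵢ)` subordinate to a cover of `K` by finitely many
`ε`-balls centred at `tᵢ` replaces `x` by `f ↦ ∑ x(ρᵢ) f(tᵢ)`, where `∑ |x(ρᵢ)| ≤ ‖x‖`. By
Minkowski, `∑ x(ρᵢ) X(tᵢ)` has `Lᵏ` norm at most `‖x‖ sup_t ‖X(t)‖ₖ`; as `ε → 0` these random
variables converge pointwise to `x(X)` by uniform continuity of each path, and Fatou's lemma passes
the bound to the limit.
-/

open MeasureTheory Filter Set Metric
open scoped ENNReal NNReal Topology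

theorem ENNReal.exists_pow_le_ne_top_iff {ι : Type*} {f : ι → ℝ≥0∞} {k : ℕ} (hk : k ≠ 0) :
    (∃ C ≠ ∞, ∀ i, f i ^ k ≤ C) ↔ ∃ C ≠ ∞, ∀ i, f i ≤ C := by
  refine ⟨fun ⟨C, hC, h⟩ => ⟨C ^ (k⁻¹ : ℝ), rpow_ne_top_of_nonneg (by positivity) hC, fun i => ?_⟩,
    fun ⟨C, hC, h⟩ => ⟨C ^ k, pow_ne_top hC, fun i => pow_le_pow_left' (h i) k⟩⟩
  rw [← ENNReal.pow_le_pow_left_iff hk, rpow_inv_natCast_pow hk]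
  exact h i

section Lp

variable {Ω : Type*} [MeasurableSpace Ω] {μ : Measure Ω}
  {E : Type*} [NormedAddCommGroup E]

theorem lintegral_nnnorm_pow_eq_eLpNorm_pow {k : ℕ} (hk : k ≠ 0) (f : Ω → E) :
    ∫⁻ ω, (‖f ω‖₊ : ℝ≥0∞) ^ k ∂μ = eLpNorm f k μ ^ k := by
  have := eLpNorm_nnreal_pow_eq_lintegral (μ := μ) (f := f) (p := k) (by exact_mod_cast hk)
  simp only [NNReal.coe_natCast, ENNReal.rpow_natCast, ENNReal.coe_natCast] at this
  simp [this, enorm_eq_nnnorm]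

variable [NormedSpace ℝ E] {p : ℝ≥0∞}

theorem eLpNorm_sum_smul_le (hp : 1 ≤ p) {ι : Type*} [Fintype ι] {Y : ι → Ω → E}
    (hY : ∀ i, AEStronglyMeasurable (Y i) μ) (a : ι → ℝ) {C : ℝ≥0∞}
    (hC : ∀ i, eLpNorm (Y i) p μ ≤ C) :
    eLpNorm (∑ i, a i • Y i) p μ ≤ (∑ i, ‖a i‖ₑ) * C := by
  calc eLpNorm (∑ i, a i • Y i) p μ ≤ ∑ i, eLpNorm (a i • Y i) p μ :=
        eLpNorm_sum_le (fun i _ => (hY i).const_smul (a i)) hp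
    _ = ∑ i, ‖a i‖ₑ * eLpNorm (Y i) p μ := by simp_rw [eLpNorm_const_smul]
    _ ≤ (∑ i, ‖a i‖ₑ) * C := by
        rw [Finset.sum_mul]
        gcongr with i
        exact hC i

variable [Fact (1 ≤ p)] {X : Ω → E}

def dualCompLp (h : ∀ x : StrongDual ℝ E, MemLp (fun ω => x (X ω)) p μ) :
    StrongDual ℝ E →ₗ[ℝ] Lp ℝ p μ where
  toFun x := (h x).toLp
  map_add' x y := MemLp.toLp_add (h x) (h y)
  map_smul' c x := MemLp.toLp_const_smul c (h x)

theorem continuous_dualCompLp (h : ∀ x : StrongDual ℝ E, MemLp (fun ω => x (X ω)) p μ) :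
    Continuous (dualCompLp h) := by
  refine (dualCompLp h).continuous_of_seq_closed_graph fun u x f hu hf => ?_
  obtain ⟨ns, hns, hae⟩ := (tendstoInMeasure_of_tendsto_Lp hf).exists_seq_tendsto_ae
  refine Lp.ext ?_
  filter_upwards [hae, ae_all_iff.2 fun n => (h (u n)).coeFn_toLp, (h x).coeFn_toLp]
    with ω hω hu' hx
  refine tendsto_nhds_unique hω ?_
  simp only [Function.comp_apply, dualCompLp, LinearMap.coe_mk, AddHom.coe_mk, hu', hx]
  exact (((ContinuousLinearMap.apply ℝ ℝ (X ω)).continuous.tendsto x).comp hu).comp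
    hns.tendsto_atTop

theorem exists_eLpNorm_dual_comp_le_mul_enorm
    (h : ∀ x : StrongDual ℝ E, MemLp (fun ω => x (X ω)) p μ) :
    ∃ C ≠ ∞, ∀ x : StrongDual ℝ E, eLpNorm (fun ω => x (X ω)) p μ ≤ C * ‖x‖ₑ := by
  let T : StrongDual ℝ E →L[ℝ] Lp ℝ p μ := ⟨dualCompLp h, continuous_dualCompLp h⟩
  refine ⟨‖T‖ₑ, enorm_ne_top, fun x => ?_⟩
  rw [← eLpNorm_congr_ae (h x).coeFn_toLp, ← Lp.enorm_def]
  exact T.le_opENorm x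

end Lp

section ContinuousMap

variable {X : Type*} [TopologicalSpace X] {ι : Type*} [Fintype ι]

theorem PartitionOfUnity.sum_smul_apply_mem_of_convex (ρ : PartitionOfUnity ι X univ)
    (y : ι → ℝ) (p : X) {S : Set ℝ} (hS : Convex ℝ S) (hy : ∀ i, ρ i p ≠ 0 → y i ∈ S) :
    (∑ i, y i • ρ i) p ∈ S := by
  have := hS.finsum_mem (ρ.nonneg · p) (ρ.sum_eq_one (mem_univ p)) hy
  rw [finsum_eq_sum_of_fintype] at this
  simpa [ContinuousMap.sum_apply, mul_comm] using this

variable [CompactSpace X]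

theorem ContinuousMap.enorm_evalCLM_le (t : X) :
    ‖(ContinuousMap.evalCLM ℝ t : StrongDual ℝ C(X, ℝ))‖ₑ ≤ 1 := by
  rw [← ofReal_norm]
  refine ENNReal.ofReal_le_one.2 (ContinuousLinearMap.opNorm_le_bound _ zero_le_one fun f => ?_)
  simpa using f.norm_coe_le_norm t

theorem PartitionOfUnity.norm_sum_smul_le_one (ρ : PartitionOfUnity ι X univ)
    {y : ι → ℝ} (hy : ∀ i, |y i| ≤ 1) : ‖∑ i, y i • ρ i‖ ≤ 1 := by
  refine (ContinuousMap.norm_le _ zero_le_one).2 fun p => ?_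
  simpa using
    ρ.sum_smul_apply_mem_of_convex y p (convex_closedBall 0 1) fun i _ => by simpa using hy i

theorem PartitionOfUnity.sum_enorm_apply_le_enorm (ρ : PartitionOfUnity ι X univ)
    (x : StrongDual ℝ C(X, ℝ)) : ∑ i, ‖x (ρ i)‖ₑ ≤ ‖x‖ₑ := by
  set u := ∑ i, (SignType.sign (x (ρ i)) : ℝ) • ρ i
  have hu : ‖u‖ ≤ 1 :=
    ρ.norm_sum_smul_le_one fun i => by rcases SignType.sign (x (ρ i)) with _ | _ | _ <;> simp
  have hsum : ∑ i, |x (ρ i)| ≤ ‖x‖ := calc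
    ∑ i, |x (ρ i)| = x u := by simp [u, map_sum, sign_mul_self]
    _ ≤ ‖x‖ * ‖u‖ := (le_abs_self _).trans (x.le_opNorm u)
    _ ≤ ‖x‖ := mul_le_of_le_one_right (norm_nonneg x) hu
  calc ∑ i, ‖x (ρ i)‖ₑ = ENNReal.ofReal (∑ i, |x (ρ i)|) := by
        simp [ENNReal.ofReal_sum_of_nonneg, Real.enorm_eq_ofReal_abs]
    _ ≤ ENNReal.ofReal ‖x‖ := ENNReal.ofReal_le_ofReal hsum
    _ = ‖x‖ₑ := ofReal_norm x

end ContinuousMap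

section CompactMetric

variable {K : Type*} [MetricSpace K] [CompactSpace K]

theorem PartitionOfUnity.dist_sum_smul_le {ι : Type*} [Fintype ι] (ρ : PartitionOfUnity ι K univ)
    {c : ι → K} {ε δ : ℝ} (hρ : ρ.IsSubordinate fun i => ball (c i) ε) (hδ : 0 ≤ δ)
    {f : C(K, ℝ)} (hf : ∀ p q, dist p q < ε → dist (f p) (f q) ≤ δ) :
    dist (∑ i, f (c i) • ρ i) f ≤ δ := by
  refine (ContinuousMap.dist_le hδ).2 fun p => ?_
  refine ρ.sum_smul_apply_mem_of_convex _ p (convex_closedBall (f p) δ) fun i hi => ?_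
  exact hf _ _ (mem_ball'.1 (hρ i (subset_tsupport _ hi)))

theorem exists_partitionOfUnity_isSubordinate_ball {ε : ℝ} (hε : 0 < ε) :
    ∃ (s : Finset K) (ρ : PartitionOfUnity s K univ), ρ.IsSubordinate fun t => ball (t : K) ε := by
  obtain ⟨s, hs⟩ := isCompact_univ.elim_finite_subcover (fun t : K => ball t ε)
    (fun _ => isOpen_ball) fun p _ => mem_iUnion.2 ⟨p, mem_ball_self hε⟩
  refine ⟨s, PartitionOfUnity.exists_isSubordinate isClosed_univ _ (fun _ => isOpen_ball) ?_⟩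
  simpa [iUnion_subtype] using hs

theorem tendsto_sum_smul_partitionOfUnity {s : ℕ → Finset K}
    {ρ : ∀ n, PartitionOfUnity (s n) K univ} {ε : ℕ → ℝ} (hε : Tendsto ε atTop (𝓝 0))
    (hρ : ∀ n, (ρ n).IsSubordinate fun t => ball (t : K) (ε n)) (f : C(K, ℝ)) :
    Tendsto (fun n => ∑ t : s n, f t • ρ n t) atTop (𝓝 f) := by
  refine Metric.tendsto_atTop.2 fun η hη => ?_
  obtain ⟨r, hr, hf⟩ := Metric.uniformContinuous_iff.1
    (CompactSpace.uniformContinuous_of_continuous f.continuous) (η / 2) (half_pos hη)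
  obtain ⟨N, hN⟩ := eventually_atTop.1 (hε.eventually (gt_mem_nhds hr))
  refine ⟨N, fun n hn => ?_⟩
  calc dist (∑ t : s n, f t • ρ n t) f ≤ η / 2 :=
        (ρ n).dist_sum_smul_le (hρ n) (half_pos hη).le fun p q h => (hf (h.trans (hN n hn))).le
    _ < η := half_lt_self hη

theorem ContinuousMap.eLpNorm_dual_comp_le_of_eLpNorm_eval_le {Ω : Type*} [MeasurableSpace Ω]
    {μ : Measure Ω} {p : ℝ≥0∞} (hp : 1 ≤ p) {X : Ω → C(K, ℝ)}
    (hX : ∀ t, AEStronglyMeasurable (fun ω => X ω t) μ) {C : ℝ≥0∞}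
    (hC : ∀ t, eLpNorm (fun ω => X ω t) p μ ≤ C) (x : StrongDual ℝ C(K, ℝ)) :
    eLpNorm (fun ω => x (X ω)) p μ ≤ ‖x‖ₑ * C := by
  choose s ρ hρ using fun n : ℕ =>
    exists_partitionOfUnity_isSubordinate_ball (K := K) (Nat.one_div_pos_of_nat (n := n))
  refine Lp.eLpNorm_le_of_ae_tendsto (u := atTop)
    (f := fun n => ∑ t : s n, x (ρ n t) • fun ω => X ω t)
    (Eventually.of_forall fun n => ?_) (fun n => ?_) (ae_of_all _ fun ω => ?_)
  · exact (eLpNorm_sum_smul_le hp (Y := fun (t : s n) ω => X ω t) (fun t => hX t) _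
      fun t => hC t).trans (mul_le_mul_left ((ρ n).sum_enorm_apply_le_enorm x) C)
  · exact Finset.aestronglyMeasurable_sum _ fun t _ => (hX t).const_smul _
  · refine ((x.continuous.tendsto _).comp
      (tendsto_sum_smul_partitionOfUnity tendsto_one_div_add_atTop_nhds_zero_nat hρ (X ω))).congr
      fun n => ?_
    simp [map_sum, mul_comm]

end CompactMetric

theorem CK_weak_kth_moment_iff_sup_pointwise_general
    {K : Type*} [MetricSpace K] [CompactSpace K]
    [MeasurableSpace (ContinuousMap K ℝ)] [BorelSpace (ContinuousMap K ℝ)]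
    {Ω : Type*} [MeasurableSpace Ω] {μ : Measure Ω}
    {k : ℕ} (hk : 1 ≤ k)
    {X : Ω → ContinuousMap K ℝ} (hX : Measurable X) :
    (∀ x : StrongDual ℝ (ContinuousMap K ℝ),
        ∫⁻ ω, (‖x (X ω)‖₊ : ℝ≥0∞) ^ k ∂μ < ⊤) ↔
    (∃ C : ℝ≥0∞, C ≠ ⊤ ∧ ∀ t : K, ∫⁻ ω, (‖X ω t‖₊ : ℝ≥0∞) ^ k ∂μ ≤ C) := by
  have hk0 : k ≠ 0 := Nat.one_le_iff_ne_zero.1 hk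
  have : Fact (1 ≤ (k : ℝ≥0∞)) := ⟨Nat.one_le_cast.2 hk⟩
  simp only [lintegral_nnnorm_pow_eq_eLpNorm_pow hk0, ENNReal.pow_lt_top_iff, hk0, or_false]
  rw [ENNReal.exists_pow_le_ne_top_iff hk0]
  constructor
  · intro h
    obtain ⟨C, hC, hle⟩ := exists_eLpNorm_dual_comp_le_mul_enorm fun x =>
      ⟨(x.continuous.measurable.comp hX).aestronglyMeasurable, h x⟩
    exact ⟨C, hC, fun t => (hle (ContinuousMap.evalCLM ℝ t)).trans
      (mul_le_of_le_one_right' (ContinuousMap.enorm_evalCLM_le t))⟩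
  · rintro ⟨C, hC, hle⟩ x
    have hXt (t : K) : AEStronglyMeasurable (fun ω => X ω t) μ :=
      ((continuous_eval_const t).measurable.comp hX).aestronglyMeasurable
    exact (ContinuousMap.eLpNorm_dual_comp_le_of_eLpNorm_eval_le this.out hXt hle x).trans_lt
      (ENNReal.mul_lt_top enorm_lt_top hC.lt_top)

/-- For a Borel measurable `C(K)`-valued random variable `X`, `K` compact
metric, `E|x*(X)|^k < ∞` for every continuous linear functional `x*` if and only if
`sup_t E|X(t)|^k < ∞`. -/
theorem CK_weak_kth_moment_iff_sup_pointwise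
    {K : Type*} [MetricSpace K] [CompactSpace K]
    [MeasurableSpace (ContinuousMap K ℝ)] [BorelSpace (ContinuousMap K ℝ)]
    {Ω : Type*} [MeasurableSpace Ω] {μ : Measure Ω} [IsProbabilityMeasure μ]
    {k : ℕ} (hk : 1 ≤ k)
    {X : Ω → ContinuousMap K ℝ} (hX : Measurable X) :
    (∀ x : StrongDual ℝ (ContinuousMap K ℝ),
        ∫⁻ ω, (‖x (X ω)‖₊ : ℝ≥0∞) ^ k ∂μ < ⊤) ↔
    (∃ C : ℝ≥0∞, C ≠ ⊤ ∧ ∀ t : K, ∫⁻ ω, (‖X ω t‖₊ : ℝ≥0∞) ^ k ∂μ ≤ C) :=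
  CK_weak_kth_moment_iff_sup_pointwise_general hk hX
end

section
/- Let S be an arbitrary set. On the Banach space c₀(S) of real-valued functions on S vanishing at infinity with the supremum norm, the σ-algebra generated by the point evaluation maps f ↦ f(s), s ∈ S, equals the σ-algebra generated by all continuous linear functionals on c₀(S). -/
/-!
Every continuous linear functional `x` on `c₀(S)` is an absolutely convergent series of point
evaluations, `x f = ∑ₛ x(δₛ) f(s)` with `δₛ = single s 1`: the finite truncations of `f`
converge to `f` in norm, and `∑ₛ |x(δₛ)| ≤ ‖x‖` by testing `x` on `∑_{s ∈ F} sign(x(δₛ)) δₛ`.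
Hence only countably many coefficients `x(δₛ)` are nonzero, so `x` is a countable sum of
measurable functions for the σ-algebra generated by the point evaluations.
-/

open MeasureTheory Filter Function
open scoped ZeroAtInfty

namespace ZeroAtInftyContinuousMap

section Normed

variable {α β : Type*} [TopologicalSpace α]

theorem coe_sum [AddCommMonoid β] [TopologicalSpace β] [ContinuousAdd β] {ι : Type*}
    (F : Finset ι) (f : ι → C₀(α, β)) : ⇑(∑ i ∈ F, f i) = ∑ i ∈ F, ⇑(f i) :=
  map_sum (⟨⟨fun f : C₀(α, β) => ⇑f, coe_zero⟩, coe_add⟩ : C₀(α, β) →+ (α → β)) f F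

variable [SeminormedAddCommGroup β]

theorem norm_le {f : C₀(α, β)} {C : ℝ} (hC : 0 ≤ C) : ‖f‖ ≤ C ↔ ∀ x, ‖f x‖ ≤ C :=
  BoundedContinuousFunction.norm_le hC (f := f.toBCF)

variable (𝕜 : Type*) [NormedField 𝕜] [NormedSpace 𝕜 β]

noncomputable def evalCLM (x : α) : C₀(α, β) →L[𝕜] β :=
  LinearMap.mkContinuous
    { toFun := fun f => f x
      map_add' := fun _ _ => rfl
      map_smul' := fun _ _ => rfl } 1
    fun f => by simpa using f.toBCF.norm_coe_le_norm x

end Normed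

section Discrete

variable {S β : Type*} [TopologicalSpace S] [DiscreteTopology S]

section Single

variable [TopologicalSpace β] [Zero β]

def single [DecidableEq S] (s : S) (b : β) : C₀(S, β) where
  toFun := Pi.single s b
  continuous_toFun := continuous_of_discreteTopology
  zero_at_infty' := by
    rw [cocompact_eq_cofinite]
    exact tendsto_nhds_of_eventually_eq <|
      (Set.finite_singleton s).eventually_cofinite_notMem.mono fun _ ht => by simp_all

@[simp]
theorem coe_single [DecidableEq S] (s : S) (b : β) : ⇑(single s b) = Pi.single s b :=
  rfl

theorem smul_single [DecidableEq S] {R : Type*} [Zero R] [SMulWithZero R β]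
    [ContinuousConstSMul R β] (r : R) (s : S) (b : β) : r • single s b = single s (r • b) := by
  ext t
  simp [Pi.single_apply]

end Single

theorem finite_setOf_le_norm [SeminormedAddCommGroup β] (f : C₀(S, β)) {ε : ℝ} (hε : 0 < ε) :
    {s | ε ≤ ‖f s‖}.Finite := by
  have h := f.zero_at_infty'
  rw [cocompact_eq_cofinite, tendsto_zero_iff_norm_tendsto_zero] at h
  simpa using eventually_cofinite.mp (h.eventually (gt_mem_nhds hε))

variable [DecidableEq S]

theorem sum_single_apply [AddCommMonoid β] [TopologicalSpace β] [ContinuousAdd β]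
    (F : Finset S) (c : S → β) (t : S) :
    (∑ s ∈ F, single s (c s)) t = if t ∈ F then c t else 0 := by
  rw [coe_sum, Finset.sum_apply]
  exact Finset.sum_pi_single t c F

variable [SeminormedAddCommGroup β]

theorem hasSum_single (f : C₀(S, β)) : HasSum (fun s => single s (f s)) f := by
  rw [HasSum, Metric.nhds_basis_closedBall.tendsto_right_iff]
  intro ε hε
  have hK := finite_setOf_le_norm f hε
  filter_upwards [eventually_ge_atTop hK.toFinset] with F hF
  rw [Metric.mem_closedBall, dist_eq_norm', norm_le hε.le]
  intro t
  rw [coe_sub, Pi.sub_apply, sum_single_apply]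
  split_ifs with ht
  · simpa using hε.le
  · have : ‖f t‖ < ε := not_le.mp fun h => ht (hF (by simpa using h))
    simpa using this.le

end Discrete

section Dual

variable {S : Type*} [TopologicalSpace S] [DiscreteTopology S] [DecidableEq S]
  (x : StrongDual ℝ C₀(S, ℝ))

theorem hasSum_strongDual_apply (f : C₀(S, ℝ)) :
    HasSum (fun s => x (single s 1) * f s) (x f) := by
  have hsingle (s : S) : single s (f s) = f s • single s 1 := by
    rw [smul_single, smul_eq_mul, mul_one]
  simpa [comp_def, hsingle, mul_comm] using (hasSum_single f).map x x.continuous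

theorem sum_abs_strongDual_single_le (F : Finset S) : ∑ s ∈ F, |x (single s 1)| ≤ ‖x‖ := by
  set c : S → ℝ := fun s => SignType.sign (x (single s 1))
  have hc : ‖∑ s ∈ F, single s (c s)‖ ≤ 1 := by
    refine (norm_le zero_le_one).2 fun t => ?_
    rw [sum_single_apply]
    split_ifs
    · rcases lt_trichotomy (x (single t 1)) 0 with h | h | h <;> simp [c, h]
    · simp
  calc ∑ s ∈ F, |x (single s 1)| = x (∑ s ∈ F, single s (c s)) := by
        simp only [map_sum]
        refine Finset.sum_congr rfl fun s _ => ?_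
        rw [← sign_mul_self, ← smul_eq_mul, ← map_smul, smul_single, smul_eq_mul, mul_one]
    _ ≤ ‖x‖ * ‖∑ s ∈ F, single s (c s)‖ := (le_abs_self _).trans (x.le_opNorm _)
    _ ≤ ‖x‖ := mul_le_of_le_one_right (norm_nonneg x) hc

theorem summable_strongDual_single : Summable fun s => x (single s 1) :=
  (summable_of_sum_le (fun _ => abs_nonneg _) (sum_abs_strongDual_single_le x)).of_abs

theorem measurable_strongDual [MeasurableSpace C₀(S, ℝ)]
    (h : ∀ s, Measurable fun f : C₀(S, ℝ) => f s) : Measurable x := by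
  set T := support fun s => x (single s 1)
  have : Countable T := (summable_strongDual_single x).countable_support.to_subtype
  refine (StronglyMeasurable.hasSum (L := .unconditional T) (f := fun t f => x (single t 1) * f t)
    (fun t => ((h t).const_mul _).stronglyMeasurable) fun f => ?_).measurable
  exact (hasSum_subtype_iff_of_support_subset (support_mul_subset_left _ _)).2
    (hasSum_strongDual_apply x f)

end Dual

end ZeroAtInftyContinuousMap

/-- On `c₀(S)` (for an arbitrary discrete set `S`), the σ-algebra generated
by the point evaluations equals the σ-algebra generated by all continuous linear
functionals. -/
theorem c0_pointEval_sigmaAlgebra_eq_weak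
    {S : Type*} [TopologicalSpace S] [DiscreteTopology S] :
    (⨆ s : S, MeasurableSpace.comap
        (fun f : ZeroAtInftyContinuousMap S ℝ => f s) (borel ℝ)) =
    (⨆ x : StrongDual ℝ (ZeroAtInftyContinuousMap S ℝ),
        MeasurableSpace.comap (fun f : ZeroAtInftyContinuousMap S ℝ => x f) (borel ℝ)) := by
  classical
  refine le_antisymm
    (iSup_le fun s => le_iSup_of_le (ZeroAtInftyContinuousMap.evalCLM ℝ s) le_rfl)
    (iSup_le fun x => ?_)
  let : MeasurableSpace C₀(S, ℝ) :=
    ⨆ s : S, MeasurableSpace.comap (fun f : C₀(S, ℝ) => f s) (borel ℝ)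
  have heval (s : S) : Measurable fun f : C₀(S, ℝ) => f s :=
    measurable_iff_comap_le.2 (le_iSup_of_le s le_rfl)
  exact (ZeroAtInftyContinuousMap.measurable_strongDual x heval).comap_le
end
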